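/- arXiv:2510.18584 — 2 statements merged into one kernel-verified Lean document; each statement's English description precedes it below -/
import Mathlib

section
/- Let G be a 1-subdivided star with center a, middle vertices b_1, …, b_n and leaves c_1, …, c_n, with weight function w satisfying w(c_1) ≥ w(c_2) ≥ … ≥ w(c_n), and w(b_i) ≤ w(b_j) whenever i ≤ j and w(c_i) = w(c_j). For 0 ≤ i ≤ n define d_i as the maximum of the following quantities: Σ_{ℓ=1}^{j} w(b_ℓ) + w(c_j) for each 1 ≤ j ≤ i; Σ_{ℓ=1}^{i} w(b_ℓ) + w(a) + w(b_j) + w(c_j) for each i < j ≤ n; and, when i = n, the quantity Σ_{ℓ=1}^{n} w(b_ℓ) + w(a). Then wtd(G) = min_{0 ≤ i ≤ n} d_i. -/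
/-!
Upper bound: for `0 ≤ i ≤ n` take the decomposition `T_i` whose root path is `b_1, …, b_i, a`,
with every `b_j` (`j > i`) a child of `a` and every `c_j` a child of `b_j`; the root-to-leaf
paths of `T_i` have exactly the weights listed in `d_i`.

Lower bound: in an arbitrary decomposition `T`, let `i` be maximal such that `b_1, …, b_i` all
lie below `a`. For `j ≤ i` the vertices `b_1, …, b_j` form a chain whose top `b_t` has `t ≤ j`;
adding `c_t`, which is comparable to `b_t` and at least as heavy as `c_j`, gives a chain of weight
at least `Σ_{ℓ ≤ j} w(b_ℓ) + w(c_j)`. For `j > i`, if `b_j` is not below `a`, then everything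
below `a` together with `a, b_j, c_j` is a chain; otherwise `b_j` is already counted below `a` and
the same chain through `b_{i+1}`, `c_{i+1}` works, as `w(c_{i+1}) ≥ w(c_j)`. If `i = n`, all the
`b_ℓ` together with `a` form a chain. So `d_i` is at most the depth of `T`.
-/

/-- A treedepth decomposition of a simple graph `G`: a partial order `le` on the
vertices such that the set of elements below any vertex is linearly ordered, and
the endpoints of every edge are comparable. -/
structure TDDecomp {V : Type*} (G : SimpleGraph V) where
  le : V → V → Prop
  le_refl : ∀ x, le x x
  le_antisymm : ∀ x y, le x y → le y x → x = y
  le_trans : ∀ x y z, le x y → le y z → le x z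
  down_linear : ∀ x y z, le y x → le z x → le y z ∨ le z y
  adj_comparable : ∀ u v, G.Adj u v → le u v ∨ le v u

/-- A chain of a treedepth decomposition: a finite set of pairwise comparable vertices. -/
def TDDecomp.IsChain {V : Type*} {G : SimpleGraph V} (T : TDDecomp G) (C : Finset V) : Prop :=
  ∀ x ∈ C, ∀ y ∈ C, T.le x y ∨ T.le y x

/-- The weighted depth of a treedepth decomposition: the maximum over all chains `C`
of the total weight of `C`. -/
noncomputable def TDDecomp.weightedDepth {V : Type*} {G : SimpleGraph V}
    (T : TDDecomp G) (w : V → ℕ) : ℕ :=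
  sSup {s | ∃ C : Finset V, T.IsChain C ∧ s = C.sum w}

/-- The weighted treedepth of `G` with weight function `w`: the minimum weighted depth
over all treedepth decompositions of `G`. -/
noncomputable def wtd {V : Type*} (G : SimpleGraph V) (w : V → ℕ) : ℕ :=
  sInf {s | ∃ T : TDDecomp G, s = T.weightedDepth w}

/-- Vertices of a 1-subdivided star with `n` branches: the center `a`, the middle
vertices `b_1, …, b_n` and the leaves `c_1, …, c_n`. -/
inductive StarV (n : ℕ) where
  | center : StarV n
  | mid : Fin n → StarV n
  | leaf : Fin n → StarV n

/-- The 1-subdivided star: edges are exactly `a b_i` and `b_i c_i` for `1 ≤ i ≤ n`. -/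
def subdivStar (n : ℕ) : SimpleGraph (StarV n) :=
  SimpleGraph.fromRel (fun x y =>
    (∃ i, x = StarV.center ∧ y = StarV.mid i) ∨
    (∃ i, x = StarV.mid i ∧ y = StarV.leaf i))

/-- `midSum n w m` is the sum `Σ_{ℓ=1}^{m} w(b_ℓ)` of the weights of the first `m`
middle vertices (0-based: indices `ℓ` with `ℓ < m`). -/
def midSum (n : ℕ) (w : StarV n → ℕ) (m : ℕ) : ℕ :=
  ∑ ℓ ∈ Finset.univ.filter (fun ℓ : Fin n => (ℓ : ℕ) < m), w (StarV.mid ℓ)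

/-- `dval n w i` is the weighted depth `d_i` of the candidate decomposition `T_i`:
the maximum of `Σ_{ℓ=1}^{j} w(b_ℓ) + w(c_j)` over `1 ≤ j ≤ i`, of
`Σ_{ℓ=1}^{i} w(b_ℓ) + w(a) + w(b_j) + w(c_j)` over `i < j ≤ n`, and, when `i = n`,
of `Σ_{ℓ=1}^{n} w(b_ℓ) + w(a)`.  (Indices `j` are 0-based here, so 1-based `j` with
`j ≤ i` corresponds to `(j : ℕ) < i`.) -/
def dval (n : ℕ) (w : StarV n → ℕ) (i : ℕ) : ℕ :=
  ((Finset.univ.filter (fun j : Fin n => (j : ℕ) < i)).sup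
      (fun j => midSum n w ((j : ℕ) + 1) + w (StarV.leaf j))) ⊔
  ((Finset.univ.filter (fun j : Fin n => i ≤ (j : ℕ))).sup
      (fun j => midSum n w i + w StarV.center + w (StarV.mid j) + w (StarV.leaf j))) ⊔
  (if i = n then midSum n w n + w StarV.center else 0)

open Finset

theorem List.sum_toFinset_le {α M : Type*} [DecidableEq α] [AddCommMonoid M] [PartialOrder M]
    [CanonicallyOrderedAdd M] [IsOrderedAddMonoid M] (l : List α) (w : α → M) :
    ∑ x ∈ l.toFinset, w x ≤ (l.map w).sum := by
  have : l.dedup.toFinset = l.toFinset := by ext; simp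
  rw [← this, List.sum_toFinset _ l.nodup_dedup]
  exact (l.dedup_sublist.map w).sum_le_sum fun _ _ => zero_le

theorem Fin.exists_longest_prefix {n : ℕ} (p : Fin n → Prop) :
    ∃ i ≤ n, (∀ l : Fin n, (l : ℕ) < i → p l) ∧ ∀ h : i < n, ¬ p ⟨i, h⟩ := by
  classical
  have hex : ∃ k, k = n ∨ ∃ h : k < n, ¬ p ⟨k, h⟩ := ⟨n, Or.inl rfl⟩
  refine ⟨Nat.find hex, Nat.find_min' hex (Or.inl rfl), fun l hl => ?_, fun h => ?_⟩
  · by_contra hpl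
    exact Nat.find_min hex hl (Or.inr ⟨l.isLt, hpl⟩)
  · rcases Nat.find_spec hex with heq | ⟨_, hp⟩
    · exact absurd heq h.ne
    · exact hp

namespace TDDecomp

variable {V : Type*} {G : SimpleGraph V} (T : TDDecomp G)

theorem isChain_of_forall_le {C : Finset V} {x : V} (h : ∀ y ∈ C, T.le y x) : T.IsChain C :=
  fun y hy z hz => T.down_linear x y z (h y hy) (h z hz)

theorem isChain_insert_of_forall_le {C : Finset V} {x y : V} [DecidableEq V]
    (h : ∀ z ∈ C, T.le z x) (hxy : T.le x y ∨ T.le y x) : T.IsChain (insert y C) := by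
  rcases hxy with hxy | hyx
  · refine T.isChain_of_forall_le (x := y) fun z hz => ?_
    rcases mem_insert.mp hz with rfl | hz
    · exact T.le_refl z
    · exact T.le_trans _ _ _ (h z hz) hxy
  · refine T.isChain_of_forall_le (x := x) fun z hz => ?_
    rcases mem_insert.mp hz with rfl | hz
    · exact hyx
    · exact h z hz

theorem IsChain.exists_top {T : TDDecomp G} {C : Finset V} (hC : T.IsChain C)
    (hne : C.Nonempty) : ∃ x ∈ C, ∀ y ∈ C, T.le y x := by
  classical
  obtain ⟨x, hx, hmax⟩ := C.exists_max_image (fun x => #(C.filter (T.le · x))) hne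
  refine ⟨x, hx, fun y hy => by_contra fun hyx => ?_⟩
  have hxy : T.le x y := (hC x hx y hy).resolve_right hyx
  have hlt : C.filter (T.le · x) ⊂ C.filter (T.le · y) := by
    rw [ssubset_iff_of_subset fun z hz => ?_]
    · exact ⟨y, mem_filter.mpr ⟨hy, T.le_refl y⟩, fun h => hyx (mem_filter.mp h).2⟩
    · obtain ⟨hzC, hzx⟩ := mem_filter.mp hz
      exact mem_filter.mpr ⟨hzC, T.le_trans _ _ _ hzx hxy⟩
  exact (hmax y hy).not_gt (card_lt_card hlt)

theorem sum_le_weightedDepth [Fintype V] (w : V → ℕ) {C : Finset V} (hC : T.IsChain C) :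
    ∑ v ∈ C, w v ≤ T.weightedDepth w :=
  le_csSup ⟨∑ v, w v, by rintro _ ⟨D, -, rfl⟩; exact sum_le_sum_of_subset D.subset_univ⟩
    ⟨C, hC, rfl⟩

/-- The decomposition of a rooted forest in which `path v` lists the vertices from the root down
to `v`; the order is the prefix order on these paths. -/
def ofPaths (path : V → List V) (getLast?_path : ∀ v, (path v).getLast? = some v)
    (adj_path : ∀ u v, G.Adj u v → path u <+: path v ∨ path v <+: path u) : TDDecomp G where
  le x y := path x <+: path y
  le_refl x := List.prefix_refl _
  le_antisymm x y hxy hyx := by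
    have := hxy.eq_of_length (_root_.le_antisymm hxy.length_le hyx.length_le)
    simpa [getLast?_path] using congrArg List.getLast? this
  le_trans _ _ _ := List.IsPrefix.trans
  down_linear _ _ _ := List.prefix_or_prefix_of_prefix
  adj_comparable := adj_path

theorem weightedDepth_ofPaths_le [DecidableEq V] {path : V → List V} {getLast?_path adj_path}
    (w : V → ℕ) {D : ℕ} (hD : ∀ v, ((path v).map w).sum ≤ D) :
    (ofPaths (G := G) path getLast?_path adj_path).weightedDepth w ≤ D := by
  refine csSup_le ⟨0, ∅, fun _ h => absurd h (notMem_empty _), rfl⟩ ?_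
  rintro _ ⟨C, hC, rfl⟩
  obtain rfl | hne := C.eq_empty_or_nonempty
  · simp
  obtain ⟨x, -, hx⟩ := hC.exists_top hne
  have hsub : C ⊆ (path x).toFinset := fun y hy =>
    List.mem_toFinset.mpr ((hx y hy).subset (List.mem_of_getLast? (getLast?_path y)))
  exact (sum_le_sum_of_subset hsub).trans ((List.sum_toFinset_le _ w).trans (hD x))

end TDDecomp

namespace StarV

def equivSum (n : ℕ) : StarV n ≃ Unit ⊕ Fin n ⊕ Fin n where
  toFun
    | center => .inl ()
    | mid l => .inr (.inl l)
    | leaf l => .inr (.inr l)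
  invFun
    | .inl _ => center
    | .inr (.inl l) => mid l
    | .inr (.inr l) => leaf l
  left_inv v := by cases v <;> rfl
  right_inv s := by rcases s with _ | _ | _ <;> rfl

instance {n : ℕ} : DecidableEq (StarV n) := (equivSum n).decidableEq

instance {n : ℕ} : Fintype (StarV n) := .ofEquiv _ (equivSum n).symm

def midEmb (n : ℕ) : Fin n ↪ StarV n := ⟨mid, fun _ _ => mid.inj⟩

@[simp]
theorem midEmb_apply {n : ℕ} (l : Fin n) : midEmb n l = mid l := rfl

end StarV

open StarV

theorem subdivStar_adj_center_mid {n : ℕ} (j : Fin n) : (subdivStar n).Adj center (mid j) := by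
  simp [subdivStar]

theorem subdivStar_adj_mid_leaf {n : ℕ} (j : Fin n) : (subdivStar n).Adj (mid j) (leaf j) := by
  simp [subdivStar]

theorem sum_map_midEmb_filter_lt {n : ℕ} (w : StarV n → ℕ) (m : ℕ) :
    ∑ v ∈ (univ.filter fun l : Fin n => (l : ℕ) < m).map (midEmb n), w v = midSum n w m :=
  sum_map _ _ _

theorem dval_le {n : ℕ} {w : StarV n → ℕ} {i D : ℕ}
    (hlt : ∀ j : Fin n, (j : ℕ) < i → midSum n w (j + 1) + w (leaf j) ≤ D)
    (hge : ∀ j : Fin n, i ≤ j → midSum n w i + w center + w (mid j) + w (leaf j) ≤ D)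
    (hn : i = n → midSum n w n + w center ≤ D) : dval n w i ≤ D := by
  refine sup_le (sup_le (Finset.sup_le fun j hj => hlt j (mem_filter.mp hj).2)
    (Finset.sup_le fun j hj => hge j (mem_filter.mp hj).2)) ?_
  split_ifs with h
  exacts [hn h, zero_le]

theorem le_dval_of_lt {n : ℕ} (w : StarV n → ℕ) {i : ℕ} {j : Fin n} (hj : (j : ℕ) < i) :
    midSum n w (j + 1) + w (leaf j) ≤ dval n w i :=
  le_sup_of_le_left <| le_sup_of_le_left <|
    le_sup (f := fun j : Fin n => midSum n w (j + 1) + w (leaf j))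
      (mem_filter.mpr ⟨mem_univ _, hj⟩)

theorem le_dval_of_le {n : ℕ} (w : StarV n → ℕ) {i : ℕ} {j : Fin n} (hj : i ≤ j) :
    midSum n w i + w center + w (mid j) + w (leaf j) ≤ dval n w i :=
  le_sup_of_le_left <| le_sup_of_le_right <|
    le_sup (f := fun j : Fin n => midSum n w i + w center + w (mid j) + w (leaf j))
      (mem_filter.mpr ⟨mem_univ _, hj⟩)

theorem midSum_add_center_le_dval {n : ℕ} (w : StarV n → ℕ) {i : ℕ} (hi : i ≤ n) :
    midSum n w i + w center ≤ dval n w i := by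
  obtain hi | rfl := hi.lt_or_eq
  · exact le_trans (by omega) (le_dval_of_le w (j := ⟨i, hi⟩) le_rfl)
  · exact le_sup_of_le_right (by rw [if_pos rfl])

section UpperBound

variable {n : ℕ}

def midPrefix (n m : ℕ) : List (StarV n) := ((List.finRange n).take m).map mid

theorem midPrefix_succ (l : Fin n) : midPrefix n (l + 1) = midPrefix n l ++ [mid l] := by
  simp [midPrefix, List.take_add_one]

theorem midPrefix_prefix {m m' : ℕ} (h : m ≤ m') : midPrefix n m <+: midPrefix n m' :=
  (List.take_prefix_take_left h).map mid

theorem sum_map_midPrefix (w : StarV n → ℕ) (m : ℕ) :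
    ((midPrefix n m).map w).sum = midSum n w m := by
  have hnodup : (midPrefix n m).Nodup :=
    ((List.nodup_finRange n).sublist (List.take_sublist _ _)).map fun _ _ => mid.inj
  have hset : (midPrefix n m).toFinset =
      (univ.filter fun l : Fin n => (l : ℕ) < m).map (midEmb n) := by
    ext v
    simp only [midPrefix, List.map_take, List.mem_toFinset, List.mem_take_iff_getElem,
      List.getElem_map, List.getElem_finRange, Fin.cast_mk, List.length_map, List.length_finRange,
      lt_inf_iff, midEmb_apply, mem_map, mem_filter, mem_univ, true_and]
    constructor
    · rintro ⟨j, ⟨hjm, hjn⟩, rfl⟩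
      exact ⟨⟨j, hjn⟩, hjm, rfl⟩
    · rintro ⟨l, hl, rfl⟩
      exact ⟨l, ⟨hl, l.isLt⟩, rfl⟩
  rw [← List.sum_toFinset _ hnodup, hset, sum_map_midEmb_filter_lt]

def midPath (n i : ℕ) (l : Fin n) : List (StarV n) :=
  if (l : ℕ) < i then midPrefix n (l + 1) else midPrefix n i ++ [center, mid l]

def starPath (n i : ℕ) : StarV n → List (StarV n)
  | center => midPrefix n i ++ [center]
  | mid l => midPath n i l
  | leaf l => midPath n i l ++ [leaf l]

theorem getLast?_starPath (i : ℕ) (v : StarV n) : (starPath n i v).getLast? = some v := by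
  rcases v with _ | l | l
  · simp [starPath]
  · by_cases hl : (l : ℕ) < i <;> simp [starPath, midPath, hl, midPrefix_succ]
  · simp [starPath]

theorem starPath_prefix_or_of_adj (i : ℕ) {u v : StarV n} (h : (subdivStar n).Adj u v) :
    starPath n i u <+: starPath n i v ∨ starPath n i v <+: starPath n i u := by
  have center_mid (j : Fin n) :
      starPath n i center <+: starPath n i (mid j) ∨
        starPath n i (mid j) <+: starPath n i center := by
    by_cases hj : (j : ℕ) < i
    · exact .inr <| by
        simpa [starPath, midPath, hj] using (midPrefix_prefix hj).trans (List.prefix_append _ _)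
    · exact .inl ⟨[mid j], by simp [starPath, midPath, hj]⟩
  have mid_leaf (j : Fin n) : starPath n i (mid j) <+: starPath n i (leaf j) :=
    List.prefix_append _ _
  rw [subdivStar, SimpleGraph.fromRel_adj] at h
  obtain ⟨-, (⟨j, rfl, rfl⟩ | ⟨j, rfl, rfl⟩) | (⟨j, rfl, rfl⟩ | ⟨j, rfl, rfl⟩)⟩ := h
  · exact center_mid j
  · exact .inl (mid_leaf j)
  · exact (center_mid j).symm
  · exact .inr (mid_leaf j)

def starDecomp (n i : ℕ) : TDDecomp (subdivStar n) :=
  .ofPaths (starPath n i) (getLast?_starPath i) fun _ _ => starPath_prefix_or_of_adj i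

theorem weightedDepth_starDecomp_le (w : StarV n → ℕ) {i : ℕ} (hi : i ≤ n) :
    (starDecomp n i).weightedDepth w ≤ dval n w i := by
  have leaf_le (l : Fin n) : ((starPath n i (leaf l)).map w).sum ≤ dval n w i := by
    by_cases hl : (l : ℕ) < i
    · simpa [starPath, midPath, hl, sum_map_midPrefix] using le_dval_of_lt w hl
    · simpa [starPath, midPath, hl, sum_map_midPrefix, add_assoc] using
        le_dval_of_le w (not_lt.mp hl)
  refine TDDecomp.weightedDepth_ofPaths_le w fun v => ?_
  rcases v with _ | l | l
  · simpa [starPath, sum_map_midPrefix] using midSum_add_center_le_dval w hi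
  · exact le_trans (by simp [starPath]) (leaf_le l)
  · exact leaf_le l

end UpperBound

section LowerBound

variable {n : ℕ} (w : StarV n → ℕ) (T : TDDecomp (subdivStar n))

open Classical in
noncomputable def midsBelowCenter : Finset (Fin n) := univ.filter fun l => T.le (mid l) center

theorem mem_midsBelowCenter {l : Fin n} : l ∈ midsBelowCenter T ↔ T.le (mid l) center := by
  simp [midsBelowCenter]

theorem sum_midsBelowCenter_add_le_weightedDepth {k : Fin n} (hk : ¬ T.le (mid k) center) :
    ∑ l ∈ midsBelowCenter T, w (mid l) + w center + w (mid k) + w (leaf k) ≤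
      T.weightedDepth w := by
  have center_le : T.le center (mid k) :=
    (T.adj_comparable _ _ (subdivStar_adj_center_mid k)).resolve_right hk
  have hchain : T.IsChain
      (insert (leaf k) (insert (mid k) (insert center ((midsBelowCenter T).map (midEmb n))))) := by
    refine T.isChain_insert_of_forall_le (x := mid k) (fun v hv => ?_)
      (T.adj_comparable _ _ (subdivStar_adj_mid_leaf k))
    simp only [mem_insert, mem_map] at hv
    obtain rfl | rfl | ⟨l, hl, rfl⟩ := hv
    · exact T.le_refl _
    · exact center_le
    · exact T.le_trans _ _ _ ((mem_midsBelowCenter T).mp hl) center_le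
  have hk' : k ∉ midsBelowCenter T := fun h => hk ((mem_midsBelowCenter T).mp h)
  have := T.sum_le_weightedDepth w hchain
  rw [sum_insert (by simp), sum_insert (by simp [hk']), sum_insert (by simp), sum_map] at this
  simp only [midEmb_apply] at this
  omega

theorem midSum_succ_add_leaf_le_weightedDepth (hc : Antitone fun j => w (leaf j)) (j : Fin n)
    (hbelow : ∀ l : Fin n, l ≤ j → T.le (mid l) center) :
    midSum n w (j + 1) + w (leaf j) ≤ T.weightedDepth w := by
  set M := (univ.filter fun l : Fin n => (l : ℕ) < j + 1).map (midEmb n)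
  have hM : T.IsChain M := T.isChain_of_forall_le (x := center) fun v hv => by
    obtain ⟨l, hl, rfl⟩ := mem_map.mp hv
    exact hbelow l (Fin.le_def.mpr (Nat.lt_succ_iff.mp (mem_filter.mp hl).2))
  obtain ⟨_, htop_mem, htop⟩ := hM.exists_top ⟨mid j, mem_map_of_mem _ (by simp)⟩
  obtain ⟨t, ht, rfl⟩ := mem_map.mp htop_mem
  have htj : t ≤ j := Fin.le_def.mpr (Nat.lt_succ_iff.mp (mem_filter.mp ht).2)
  have hchain : T.IsChain (insert (leaf t) M) :=
    T.isChain_insert_of_forall_le htop (T.adj_comparable _ _ (subdivStar_adj_mid_leaf t))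
  have := T.sum_le_weightedDepth w hchain
  rw [sum_insert (by simp [M]), sum_map_midEmb_filter_lt] at this
  have : w (leaf j) ≤ w (leaf t) := hc htj
  omega

theorem midSum_add_center_le_weightedDepth (hbelow : ∀ l : Fin n, T.le (mid l) center) :
    midSum n w n + w center ≤ T.weightedDepth w := by
  have hchain : T.IsChain
      (insert center ((univ.filter fun l : Fin n => (l : ℕ) < n).map (midEmb n))) :=
    T.isChain_insert_of_forall_le (x := center) (fun v hv => by
      obtain ⟨l, -, rfl⟩ := mem_map.mp hv
      exact hbelow l) (.inl (T.le_refl _))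
  have := T.sum_le_weightedDepth w hchain
  rwa [sum_insert (by simp), sum_map_midEmb_filter_lt, add_comm] at this

theorem dval_le_weightedDepth (hc : Antitone fun j => w (leaf j)) {i : ℕ}
    (hbelow : ∀ l : Fin n, (l : ℕ) < i → T.le (mid l) center)
    (hnext : ∀ h : i < n, ¬ T.le (mid ⟨i, h⟩) center) :
    dval n w i ≤ T.weightedDepth w := by
  refine dval_le (fun j hj => ?_) (fun j hj => ?_) fun hin => ?_
  · exact midSum_succ_add_leaf_le_weightedDepth w T hc j fun l hl => hbelow l (by omega)
  · have hprefix : (univ.filter fun l : Fin n => (l : ℕ) < i) ⊆ midsBelowCenter T :=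
      fun l hl => (mem_midsBelowCenter T).mpr (hbelow l (mem_filter.mp hl).2)
    by_cases hj_below : T.le (mid j) center
    · have hsum : midSum n w i + w (mid j) ≤ ∑ l ∈ midsBelowCenter T, w (mid l) := by
        have hj_notMem : j ∉ univ.filter fun l : Fin n => (l : ℕ) < i := by simp [hj]
        rw [midSum, add_comm, ← sum_insert (f := fun l => w (mid l)) hj_notMem]
        exact sum_le_sum_of_subset
          (insert_subset ((mem_midsBelowCenter T).mpr hj_below) hprefix)
      have hin : i < n := lt_of_le_of_lt hj j.isLt
      have := sum_midsBelowCenter_add_le_weightedDepth w T (hnext hin)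
      have : w (leaf j) ≤ w (leaf ⟨i, hin⟩) := hc (show (⟨i, hin⟩ : Fin n) ≤ j from hj)
      omega
    · have hsum : midSum n w i ≤ ∑ l ∈ midsBelowCenter T, w (mid l) :=
        sum_le_sum_of_subset hprefix
      have := sum_midsBelowCenter_add_le_weightedDepth w T hj_below
      omega
  · subst hin
    exact midSum_add_center_le_weightedDepth w T fun l => hbelow l l.isLt

end LowerBound

theorem stmt9_general (n : ℕ) (w : StarV n → ℕ)
    (hc : ∀ i j : Fin n, i ≤ j → w (StarV.leaf j) ≤ w (StarV.leaf i)) :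
    wtd (subdivStar n) w = (Finset.range (n + 1)).inf' Finset.nonempty_range_add_one (dval n w) := by
  apply le_antisymm
  · obtain ⟨i, hi, hmin⟩ := exists_mem_eq_inf' nonempty_range_add_one (dval n w)
    rw [hmin]
    exact le_trans (Nat.sInf_le ⟨starDecomp n i, rfl⟩)
      (weightedDepth_starDecomp_le w (Nat.lt_succ_iff.mp (mem_range.mp hi)))
  · refine le_csInf ⟨_, starDecomp n 0, rfl⟩ ?_
    rintro _ ⟨T, rfl⟩
    obtain ⟨i, hi, hbelow, hnext⟩ := Fin.exists_longest_prefix fun l => T.le (mid l) center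
    exact (inf'_le _ (mem_range.mpr (Nat.lt_succ_of_le hi))).trans
      (dval_le_weightedDepth w T hc hbelow hnext)

/-- Under the weight ordering assumptions, the weighted treedepth of the
1-subdivided star equals `min_{0 ≤ i ≤ n} d_i`. -/
theorem stmt9 (n : ℕ) (w : StarV n → ℕ) (hw : ∀ v, 0 < w v)
    (hc : ∀ i j : Fin n, i ≤ j → w (StarV.leaf j) ≤ w (StarV.leaf i))
    (hb : ∀ i j : Fin n, i ≤ j → w (StarV.leaf i) = w (StarV.leaf j) →
      w (StarV.mid i) ≤ w (StarV.mid j)) :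
    wtd (subdivStar n) w = (Finset.range (n + 1)).inf' Finset.nonempty_range_add_one (dval n w) :=
  stmt9_general n w hc
end

section
/- Let G be a finite simple graph in which every vertex has degree exactly 3, with n = |V(G)| = 2^m for some m ≥ 1, let k be an integer with 1 < k < n−1, and let G' (with weights, β, α and k' as specified) be the associated gadget graph. If G has a vertex cover of size k, then G' has a treedepth decomposition of weighted depth at most k' = 3n + k + α + 2; in particular wtd(G') ≤ k'. -/
/-- Vertices of the gadget graph `G'` built from a cubic graph `G` on `2^m` vertices:
`copy v i` is `v_{i+1}` (the two copies `v_1, v_2` of `v`), `guard v i` is `v_{g(i+1)}`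
(the three vertices `v_{g1}, v_{g2}, v_{g3}`), and `tree t i j` is the `j`-th vertex at
depth `i` of the complete binary tree `T_{t+1}` (depth `m` vertices are the `2^m` leaves). -/
inductive GadgetV (V : Type*) (m : ℕ) where
  | copy : V → Fin 2 → GadgetV V m
  | guard : V → Fin 3 → GadgetV V m
  | tree : Fin 3 → (i : Fin (m + 1)) → Fin (2 ^ i.val) → GadgetV V m

/-- The base relation generating the edges of `G'` (for `e : V ≃ Fin (2^m)` the
identification of `V(G)` with the leaves of each tree):
copies of adjacent vertices are adjacent (`u_1v_1, u_2v_2, u_1v_2, u_2v_1`);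
each `v_{gi}` is adjacent to `v_1` and `v_2`; consecutive levels of each complete
binary tree `T_t` are joined (child `j'` at depth `i+1` to parent `j'/2` at depth `i`);
and `v_1, v_{g1}` are joined to the leaf `v_{t_1}` of `T_1`, `v_2, v_{g2}` to the leaf
`v_{t_2}` of `T_2`, and `v_{g3}` to the leaf `v_{t_3}` of `T_3`. -/
def gadgetRel {V : Type*} {m : ℕ} (G : SimpleGraph V) (e : V ≃ Fin (2 ^ m)) :
    GadgetV V m → GadgetV V m → Prop
  | .copy u _, .copy v _ => G.Adj u v
  | .copy u _, .guard v _ => u = v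
  | .copy u i, .tree t d j => (t : ℕ) = (i : ℕ) ∧ (d : ℕ) = m ∧ (j : ℕ) = (e u : ℕ)
  | .guard u i, .tree t d j => (t : ℕ) = (i : ℕ) ∧ (d : ℕ) = m ∧ (j : ℕ) = (e u : ℕ)
  | .tree t d j, .tree t' d' j' => t = t' ∧ (d : ℕ) + 1 = (d' : ℕ) ∧ (j' : ℕ) / 2 = (j : ℕ)
  | _, _ => False

/-- The gadget graph `G'`. -/
def gadget {V : Type*} {m : ℕ} (G : SimpleGraph V) (e : V ≃ Fin (2 ^ m)) :
    SimpleGraph (GadgetV V m) :=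
  SimpleGraph.fromRel (gadgetRel G e)

/-- The weight function of `G'` (with parameter `β`): copies `v_1, v_2` have weight `2`,
the `v_{gi}` have weight `1`, and a tree vertex at depth `i` has weight `β + 3i`. -/
def gadgetW {V : Type*} {m : ℕ} (β : ℕ) : GadgetV V m → ℕ
  | .copy _ _ => 2
  | .guard _ _ => 1
  | .tree _ i _ => β + 3 * (i : ℕ)

/-!
Put the copies `v_1, v_2` of the vertices of the cover `C` and the guards `v_{g1}, v_{g2}, v_{g3}`
of the other vertices on one path, the spine, of weight `4k + 3(n - k) = 3n + k`. Below it hang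
the three trees, and below the leaf `v_{t_i}` hangs whichever of `v_i, v_{gi}` is not on the spine.
As `C` covers `G`, every edge of `G'` then joins comparable vertices, and a chain consists of part
of the spine, part of a root-to-leaf path of one tree (weight at most `α`) and at most one pendant
vertex (weight at most `2`).

A decomposition is encoded by the root path of each vertex, ordered by the prefix relation.
-/

lemma List.sum_toFinset_le_sum_map {α : Type*} [DecidableEq α] (l : List α) (w : α → ℕ) :
    ∑ x ∈ l.toFinset, w x ≤ (l.map w).sum := by
  rw [Finset.sum_eq_multiset_sum, List.toFinset_val, Multiset.map_coe, Multiset.sum_coe]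
  exact ((List.dedup_sublist l).map w).sum_le_sum fun _ _ => Nat.zero_le _

namespace TDDecomp

variable {V : Type*} {G : SimpleGraph V}

def ofRootPath (path : V → List V) (getLast?_path : ∀ x, (path x).getLast? = some x)
    (adj : ∀ u v, G.Adj u v → path u <+: path v ∨ path v <+: path u) : TDDecomp G where
  le x y := path x <+: path y
  le_refl x := List.prefix_refl _
  le_antisymm x y hxy hyx := by
    have hpath := hxy.eq_of_length (_root_.le_antisymm hxy.length_le hyx.length_le)
    simpa [getLast?_path] using congrArg List.getLast? hpath
  le_trans _ _ _ := List.IsPrefix.trans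
  down_linear _ _ _ := List.prefix_or_prefix_of_prefix
  adj_comparable := adj

/-- Every chain lies on the root path of its element with the longest root path. -/
lemma weightedDepth_ofRootPath_le (path : V → List V)
    (getLast?_path : ∀ x, (path x).getLast? = some x)
    (adj : ∀ u v, G.Adj u v → path u <+: path v ∨ path v <+: path u) (w : V → ℕ) {B : ℕ}
    (hB : ∀ x, ((path x).map w).sum ≤ B) :
    (ofRootPath path getLast?_path adj).weightedDepth w ≤ B := by
  classical
  refine csSup_le' ?_
  rintro _ ⟨Ch, hCh, rfl⟩
  rcases Ch.eq_empty_or_nonempty with rfl | hne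
  · simp
  obtain ⟨top, htop, hmax⟩ := Ch.exists_max_image (fun x => (path x).length) hne
  have hsub : Ch ⊆ (path top).toFinset := fun y hy => by
    have hprefix : path y <+: path top := by
      rcases hCh y hy top htop with h | h
      · exact h
      · exact (h.eq_of_length (_root_.le_antisymm h.length_le (hmax y hy))) ▸ List.prefix_refl _
    exact List.mem_toFinset.2 (hprefix.subset (List.mem_of_getLast? (getLast?_path y)))
  calc Ch.sum w ≤ ∑ x ∈ (path top).toFinset, w x := Finset.sum_le_sum_of_subset hsub
    _ ≤ ((path top).map w).sum := List.sum_toFinset_le_sum_map _ w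
    _ ≤ B := hB top

end TDDecomp

lemma wtd_le_weightedDepth {V : Type*} {G : SimpleGraph V} (T : TDDecomp G) (w : V → ℕ) :
    wtd G w ≤ T.weightedDepth w :=
  Nat.sInf_le ⟨T, rfl⟩

lemma List.getLast?_take_idxOf_succ {α : Type*} [BEq α] [LawfulBEq α] {l : List α} {x : α}
    (hx : x ∈ l) : (l.take (l.idxOf x + 1)).getLast? = some x := by
  have hlt := List.idxOf_lt_length_iff.2 hx
  simp [List.getLast?_take, List.getElem?_eq_getElem hlt, List.getElem_idxOf hlt]

namespace GadgetV

variable {V : Type*} {m : ℕ}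

def treePath (t : Fin 3) : (d : ℕ) → d ≤ m → (j : ℕ) → j < 2 ^ d → List (GadgetV V m)
  | 0, _, j, hj => [.tree t ⟨0, by omega⟩ ⟨j, hj⟩]
  | d + 1, hd, j, hj =>
      treePath t d (by omega) (j / 2) (by rw [pow_succ] at hj; omega) ++
        [.tree t ⟨d + 1, by omega⟩ ⟨j, hj⟩]

lemma treePath_congr (t : Fin 3) {d d' j j' : ℕ} {hd : d ≤ m} {hd' : d' ≤ m} {hj : j < 2 ^ d}
    {hj' : j' < 2 ^ d'} (hdd' : d = d') (hjj' : j = j') :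
    (treePath t d hd j hj : List (GadgetV V m)) = treePath t d' hd' j' hj' := by
  subst hdd' hjj'
  rfl

lemma getLast?_treePath (t : Fin 3) (d : ℕ) (hd : d ≤ m) (j : ℕ) (hj : j < 2 ^ d) :
    (treePath t d hd j hj : List (GadgetV V m)).getLast? =
      some (.tree t ⟨d, by omega⟩ ⟨j, hj⟩) := by
  cases d <;> simp [treePath]

lemma sum_map_gadgetW_treePath (β : ℕ) (t : Fin 3) (d : ℕ) (hd : d ≤ m) (j : ℕ)
    (hj : j < 2 ^ d) :
    ((treePath t d hd j hj : List (GadgetV V m)).map (gadgetW β)).sum =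
      ∑ i ∈ Finset.range (d + 1), (β + 3 * i) := by
  induction d generalizing j with
  | zero => simp [treePath, gadgetW]
  | succ d ih => simp [treePath, ih, gadgetW, Finset.sum_range_succ _ (d + 1)]

lemma treePath_prefix_of_parent (t : Fin 3) {d d' j j' : ℕ} {hd : d ≤ m} {hd' : d' ≤ m}
    {hj : j < 2 ^ d} {hj' : j' < 2 ^ d'} (hdd' : d + 1 = d') (hjj' : j' / 2 = j) :
    (treePath t d hd j hj : List (GadgetV V m)) <+: treePath t d' hd' j' hj' := by
  subst hdd' hjj'
  exact List.prefix_append _ _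

variable [DecidableEq V] (C : Finset V)

def spineBlock (v : V) : List (GadgetV V m) :=
  if v ∈ C then [.copy v 0, .copy v 1] else [.guard v 0, .guard v 1, .guard v 2]

noncomputable def spine [Fintype V] : List (GadgetV V m) :=
  Finset.univ.toList.flatMap (spineBlock C)

variable [Fintype V]

lemma copy_mem_spine {v : V} (hv : v ∈ C) (i : Fin 2) : (copy v i : GadgetV V m) ∈ spine C := by
  refine List.mem_flatMap.2 ⟨v, Finset.mem_toList.2 (Finset.mem_univ v), ?_⟩
  fin_cases i <;> simp [spineBlock, hv]

lemma guard_mem_spine {v : V} (hv : v ∉ C) (i : Fin 3) :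
    (guard v i : GadgetV V m) ∈ spine C := by
  refine List.mem_flatMap.2 ⟨v, Finset.mem_toList.2 (Finset.mem_univ v), ?_⟩
  fin_cases i <;> simp [spineBlock, hv]

lemma sum_map_gadgetW_spine (β : ℕ) :
    ((spine C : List (GadgetV V m)).map (gadgetW β)).sum = 3 * Fintype.card V + C.card := by
  have hblock : ∀ v : V, ((spineBlock C v : List (GadgetV V m)).map (gadgetW β)).sum =
      3 + if v ∈ C then 1 else 0 := fun v => by
    by_cases hv : v ∈ C <;> simp [spineBlock, hv, gadgetW]
  simp [spine, List.flatMap_def, hblock, Finset.sum_add_distrib, mul_comm]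

variable [DecidableEq (GadgetV V m)] (e : V ≃ Fin (2 ^ m))

noncomputable def spinePrefix (x : GadgetV V m) : List (GadgetV V m) :=
  (spine C).take ((spine C).idxOf x + 1)

def leafPath (t : Fin 3) (v : V) : List (GadgetV V m) :=
  treePath t m le_rfl (e v) (e v).isLt

noncomputable def rootPath : GadgetV V m → List (GadgetV V m)
  | .copy v i =>
      if v ∈ C then spinePrefix C (.copy v i) else spine C ++ leafPath e i.castSucc v ++ [.copy v i]
  | .guard v i =>
      if v ∈ C then spine C ++ leafPath e i v ++ [.guard v i] else spinePrefix C (.guard v i)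
  | .tree t d j => spine C ++ treePath t d (Nat.lt_succ_iff.mp d.isLt) j j.isLt

lemma getLast?_rootPath (x : GadgetV V m) : (rootPath C e x).getLast? = some x := by
  cases x with
  | copy v i =>
    by_cases hv : v ∈ C
    · simpa [rootPath, spinePrefix, hv] using List.getLast?_take_idxOf_succ (copy_mem_spine C hv i)
    · simp [rootPath, hv]
  | guard v i =>
    by_cases hv : v ∈ C
    · simp [rootPath, hv]
    · simpa [rootPath, spinePrefix, hv] using List.getLast?_take_idxOf_succ (guard_mem_spine C hv i)
  | tree t d j => simp [rootPath, getLast?_treePath]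

lemma rootPath_eq_take_or_eq_spine_append (x : GadgetV V m) :
    (∃ n, rootPath C e x = (spine C).take n) ∨ ∃ l, rootPath C e x = spine C ++ l := by
  cases x with
  | copy v i =>
    by_cases hv : v ∈ C
    · exact Or.inl ⟨_, if_pos hv⟩
    · exact Or.inr ⟨_, (if_neg hv).trans (List.append_assoc _ _ _)⟩
  | guard v i =>
    by_cases hv : v ∈ C
    · exact Or.inr ⟨_, (if_pos hv).trans (List.append_assoc _ _ _)⟩
    · exact Or.inl ⟨_, if_neg hv⟩
  | tree t d j => exact Or.inr ⟨_, rfl⟩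

lemma take_spine_comparable_rootPath (n : ℕ) (y : GadgetV V m) :
    (spine C).take n <+: rootPath C e y ∨ rootPath C e y <+: (spine C).take n := by
  rcases rootPath_eq_take_or_eq_spine_append C e y with ⟨n', h⟩ | ⟨l, h⟩ <;> rw [h]
  · rcases le_total n n' with hle | hle
    · exact Or.inl (List.take_prefix_take_left hle)
    · exact Or.inr (List.take_prefix_take_left hle)
  · exact Or.inl ((List.take_prefix n _).trans (List.prefix_append _ _))

lemma rootPath_tree_eq_leafPath {t : Fin 3} {d : Fin (m + 1)} {j : Fin (2 ^ d.val)} {v : V}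
    (hd : (d : ℕ) = m) (hj : (j : ℕ) = e v) :
    rootPath C e (.tree t d j) = spine C ++ leafPath e t v :=
  congrArg (spine C ++ ·) (treePath_congr t hd hj)

/-- Every edge of `G'` has an endpoint on the spine, except the tree edges and the edges from a
leaf to the vertex hanging below it. -/
lemma rootPath_comparable_of_gadgetRel {G : SimpleGraph V}
    (hcov : ∀ u v, G.Adj u v → u ∈ C ∨ v ∈ C) {x y : GadgetV V m} (h : gadgetRel G e x y) :
    rootPath C e x <+: rootPath C e y ∨ rootPath C e y <+: rootPath C e x := by
  have of_left : ∀ n, rootPath C e x = (spine C).take n →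
      rootPath C e x <+: rootPath C e y ∨ rootPath C e y <+: rootPath C e x :=
    fun n hx => hx ▸ take_spine_comparable_rootPath C e n y
  have of_right : ∀ n, rootPath C e y = (spine C).take n →
      rootPath C e x <+: rootPath C e y ∨ rootPath C e y <+: rootPath C e x :=
    fun n hy => (hy ▸ take_spine_comparable_rootPath C e n x).symm
  cases x with
  | copy u i =>
    cases y with
    | copy v j =>
      rcases hcov u v h with hu | hv
      · exact of_left _ (if_pos hu)
      · exact of_right _ (if_pos hv)
    | guard v j =>
      obtain rfl : u = v := h
      by_cases hu : u ∈ C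
      · exact of_left _ (if_pos hu)
      · exact of_right _ (if_neg hu)
    | tree t d j =>
      by_cases hu : u ∈ C
      · exact of_left _ (if_pos hu)
      · refine Or.inr ?_
        rw [rootPath_tree_eq_leafPath C e h.2.1 h.2.2, show t = i.castSucc from Fin.ext h.1]
        simp only [rootPath, if_neg hu]
        exact List.prefix_append _ _
  | guard u i =>
    cases y with
    | tree t d j =>
      by_cases hu : u ∈ C
      · refine Or.inr ?_
        rw [rootPath_tree_eq_leafPath C e h.2.1 h.2.2, show t = i from Fin.ext h.1]
        simp only [rootPath, if_pos hu]
        exact List.prefix_append _ _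
      · exact of_left _ (if_neg hu)
    | _ => exact h.elim
  | tree t d j =>
    cases y with
    | tree t' d' j' =>
      obtain ⟨rfl, hd, hj⟩ := h
      exact Or.inl ((List.prefix_append_right_inj _).2 (treePath_prefix_of_parent t hd hj))
    | _ => exact h.elim

lemma sum_map_gadgetW_rootPath_le (β : ℕ) (x : GadgetV V m) :
    ((rootPath C e x).map (gadgetW β)).sum ≤
      3 * Fintype.card V + C.card + ∑ i ∈ Finset.range (m + 1), (β + 3 * i) + 2 := by
  rw [← sum_map_gadgetW_spine C β]
  have htree : ∀ t d hd j hj, ((treePath t d hd j hj : List (GadgetV V m)).map (gadgetW β)).sum ≤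
      ∑ i ∈ Finset.range (m + 1), (β + 3 * i) := fun t d hd j hj => by
    rw [sum_map_gadgetW_treePath]
    exact Finset.sum_le_sum_of_subset (Finset.range_subset_range.2 (by omega))
  have htake : ∀ n, (((spine C : List (GadgetV V m)).take n).map (gadgetW β)).sum ≤
      ((spine C).map (gadgetW β)).sum :=
    fun n => ((List.take_sublist n _).map _).sum_le_sum fun _ _ => Nat.zero_le _
  cases x with
  | copy v i =>
    by_cases hv : v ∈ C
    · simp only [rootPath, spinePrefix, if_pos hv]
      exact le_add_right (le_add_right (htake _))
    · simp only [rootPath, if_neg hv, leafPath, List.map_append, List.sum_append, List.map_cons,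
        List.map_nil, List.sum_cons, List.sum_nil, gadgetW]
      linarith [htree i.castSucc m le_rfl (e v) (e v).isLt]
  | guard v i =>
    by_cases hv : v ∈ C
    · simp only [rootPath, if_pos hv, leafPath, List.map_append, List.sum_append, List.map_cons,
        List.map_nil, List.sum_cons, List.sum_nil, gadgetW]
      linarith [htree i m le_rfl (e v) (e v).isLt]
    · simp only [rootPath, spinePrefix, if_neg hv]
      exact le_add_right (le_add_right (htake _))
  | tree t d j =>
    simp only [rootPath, List.map_append, List.sum_append]
    linarith [htree t d (Nat.lt_succ_iff.mp d.isLt) j j.isLt]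

noncomputable def coverDecomp {G : SimpleGraph V} (hcov : ∀ u v, G.Adj u v → u ∈ C ∨ v ∈ C) :
    TDDecomp (gadget G e) :=
  TDDecomp.ofRootPath (rootPath C e) (getLast?_rootPath C e) fun _ _ hxy =>
    ((SimpleGraph.fromRel_adj _ _ _).1 hxy).2.elim (rootPath_comparable_of_gadgetRel C e hcov)
      fun h => (rootPath_comparable_of_gadgetRel C e hcov h).symm

lemma weightedDepth_coverDecomp_le {G : SimpleGraph V}
    (hcov : ∀ u v, G.Adj u v → u ∈ C ∨ v ∈ C) (β : ℕ) :
    (coverDecomp C e hcov).weightedDepth (gadgetW β) ≤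
      3 * Fintype.card V + C.card + ∑ i ∈ Finset.range (m + 1), (β + 3 * i) + 2 :=
  TDDecomp.weightedDepth_ofRootPath_le _ _ _ _ (sum_map_gadgetW_rootPath_le C e β)

end GadgetV

theorem stmt11_general {V : Type*} [Fintype V] (G : SimpleGraph V) (m : ℕ) (e : V ≃ Fin (2 ^ m))
    (k : ℕ) (β α k' : ℕ)
    (hα : α = ∑ i ∈ Finset.range (m + 1), (β + 3 * i))
    (hk' : k' = 3 * Fintype.card V + k + α + 2)
    (C : Finset V) (hcov : ∀ u v : V, G.Adj u v → u ∈ C ∨ v ∈ C) (hC : C.card = k) :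
    (∃ T : TDDecomp (gadget G e), T.weightedDepth (gadgetW β) ≤ k') ∧
      wtd (gadget G e) (gadgetW β) ≤ k' := by
  classical
  have hdepth : (GadgetV.coverDecomp C e hcov).weightedDepth (gadgetW β) ≤ k' := by
    simpa only [hk', hα, hC] using GadgetV.weightedDepth_coverDecomp_le C e hcov β
  exact ⟨⟨_, hdepth⟩, (wtd_le_weightedDepth _ _).trans hdepth⟩

/-- If the cubic graph `G` (on `n = 2^m` vertices, `m ≥ 1`, with
`1 < k < n - 1`) has a vertex cover of size `k`, then the gadget graph `G'` (with
weights given by `β = 3n + k + 3`, `α = Σ_{i=0}^{m} (β + 3i)`, `k' = 3n + k + α + 2`)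
has a treedepth decomposition of weighted depth at most `k'`; in particular
`wtd G' ≤ k'`. -/
theorem stmt11 {V : Type*} [Fintype V] (G : SimpleGraph V) (m : ℕ) (hm : 1 ≤ m)
    (hcard : Fintype.card V = 2 ^ m) (e : V ≃ Fin (2 ^ m))
    (hdeg : ∀ v : V, (G.neighborSet v).ncard = 3)
    (k : ℕ) (hk1 : 1 < k) (hk2 : k < Fintype.card V - 1)
    (β α k' : ℕ)
    (hβ : β = 3 * Fintype.card V + k + 3)
    (hα : α = ∑ i ∈ Finset.range (m + 1), (β + 3 * i))
    (hk' : k' = 3 * Fintype.card V + k + α + 2)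
    (C : Finset V) (hcov : ∀ u v : V, G.Adj u v → u ∈ C ∨ v ∈ C) (hC : C.card = k) :
    (∃ T : TDDecomp (gadget G e), T.weightedDepth (gadgetW β) ≤ k') ∧
      wtd (gadget G e) (gadgetW β) ≤ k' :=
  stmt11_general G m e k β α k' hα hk' C hcov hC
end
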